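/- Every Markov matrix has an eigenvector with eigenvalue 1 all of whose components are nonnegative and whose components sum to 1. -/
import Mathlib


theorem markov_has_nonneg_fixed_vector {n : ℕ} (hn : 0 < n)
    (A : Matrix (Fin n) (Fin n) ℝ)
    (hnonneg : ∀ i j, 0 ≤ A i j) (hcol : ∀ j, ∑ i, A i j = 1) :
    ∃ ξ : Fin n → ℝ, A.mulVec ξ = ξ ∧ (∀ i, 0 ≤ ξ i) ∧ ∑ i, ξ i = 1 := by
  -- Step 1: det (A - 1) = 0, since Aᵀ - 1 kills the all-ones vector
  have hdetT : (A.transpose - 1).det = 0 := by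
    rw [Matrix.exists_mulVec_eq_zero_iff.symm]
    refine ⟨fun _ => 1, ?_, ?_⟩
    · intro h
      have := congrFun h ⟨0, hn⟩
      simp at this
    · funext i
      simp [Matrix.sub_mulVec, Matrix.mulVec, dotProduct, Matrix.one_mulVec,
        Matrix.transpose_apply, hcol i, Matrix.one_apply, Finset.sum_ite_eq]
  have hdet : (A - 1).det = 0 := by
    have h : (A - 1).transpose = A.transpose - 1 := by
      simp [Matrix.transpose_sub]
    rw [← Matrix.det_transpose, h, hdetT]
  -- Step 2: get a nonzero fixed vector v
  obtain ⟨v, hv0, hv⟩ := Matrix.exists_mulVec_eq_zero_iff.mpr hdet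
  have hfix : A.mulVec v = v := by
    funext i
    have := congrFun hv i
    simp [Matrix.sub_mulVec, Matrix.one_mulVec, sub_eq_zero] at this
    exact this
  -- Step 3: w = |v| is also fixed
  set w : Fin n → ℝ := fun i => |v i| with hw
  have hge : ∀ i, w i ≤ A.mulVec w i := by
    intro i
    have h : |A.mulVec v i| ≤ A.mulVec w i := by
      simp only [Matrix.mulVec, dotProduct]
      calc |∑ j, A i j * v j| ≤ ∑ j, |A i j * v j| := Finset.abs_sum_le_sum_abs _ _
        _ = ∑ j, A i j * w j := by
            refine Finset.sum_congr rfl fun j _ => ?_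
            rw [abs_mul, abs_of_nonneg (hnonneg i j)]
    rwa [hfix] at h
  have hsum_eq : ∑ i, w i = ∑ i, A.mulVec w i := by
    simp only [Matrix.mulVec, dotProduct]
    rw [Finset.sum_comm]
    simp [← Finset.sum_mul, hcol]
  have hfixw : A.mulVec w = w := by
    funext i
    exact ((Finset.sum_eq_sum_iff_of_le (fun i _ => hge i)).mp hsum_eq i
      (Finset.mem_univ i)).symm
  -- Step 4: normalize
  have hSpos : 0 < ∑ i, w i := by
    obtain ⟨i, hi⟩ := Function.ne_iff.mp hv0
    exact Finset.sum_pos' (fun j _ => abs_nonneg _)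
      ⟨i, Finset.mem_univ i, abs_pos.mpr hi⟩
  set S := ∑ i, w i with hS
  refine ⟨S⁻¹ • w, ?_, ?_, ?_⟩
  · rw [Matrix.mulVec_smul, hfixw]
  · intro i
    exact mul_nonneg (inv_nonneg.mpr hSpos.le) (abs_nonneg _)
  · simp only [Pi.smul_apply, smul_eq_mul, ← Finset.mul_sum]
    exact inv_mul_cancel₀ hSpos.ne'
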